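/- arXiv:1910.00585 — 6 statements merged into one kernel-verified Lean document; each statement's English description precedes it below -/
import Mathlib

section
/- Let P be a probability measure on a measurable space Ω and let κ ∈ (0,1). (a) If f is a p-function w.r.t. P, then the function ω ↦ κ·f(ω)^{κ−1} (taking values in [0,∞], with the convention 0^{κ−1} = ∞) is an e-function w.r.t. P, i.e. ∫ κ·f^{κ−1} dP ≤ 1. (b) If f is an e-function w.r.t. P, then the function ω ↦ min(1, 1/f(ω)) (with 1/0 = ∞, 1/∞ = 0) is a p-function w.r.t. P, i.e. P{ω : min(1, 1/f(ω)) ≤ ε} ≤ ε for every ε > 0. -/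
/-!
A p-function `f` stochastically dominates the uniform distribution on `(0, 1]`: for every lower
set `S` of `[0, ∞]`, `P (f ∈ S) ≤ Leb {x ∈ (0, 1] | x ∈ S}`, because such an `S` is an initial
interval `[0, a)` or `[0, a]` and `P (f ≤ a) ≤ a`. The layer-cake formula turns this into
`∫ g ∘ f dP ≤ ∫₀¹ g` for every antitone `g`, and `∫₀¹ κ x^(κ-1) dx = 1`. Part (b) is Markov's
inequality.
-/

open MeasureTheory Set
open scoped ENNReal

lemma volume_restrict_Ioi_zero_ofReal_lt (a : ℝ≥0∞) :
    volume.restrict (Ioi 0) {t : ℝ | ENNReal.ofReal t < a} = a := by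
  rw [Measure.restrict_apply' measurableSet_Ioi]
  rcases eq_or_ne a ⊤ with rfl | ha
  · simp
  · have : {t : ℝ | ENNReal.ofReal t < a} ∩ Ioi 0 = Ioo 0 a.toReal := by
      ext t
      rw [mem_inter_iff, mem_ofPred_eq, mem_Ioi, mem_Ioo, ← ENNReal.ofReal_toReal ha,
        ENNReal.ofReal_lt_ofReal_iff', ENNReal.toReal_ofReal ENNReal.toReal_nonneg]
      exact ⟨fun h => ⟨h.2, h.1.1⟩, fun h => ⟨⟨h.2, h.1.trans h.2⟩, h.1⟩⟩
    rw [this, Real.volume_Ioo, sub_zero, ENNReal.ofReal_toReal ha]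

lemma lintegral_eq_lintegral_meas_ofReal_lt {α : Type*} [MeasurableSpace α] (μ : Measure α)
    [SFinite μ] {h : α → ℝ≥0∞} (hh : Measurable h) :
    ∫⁻ a, h a ∂μ = ∫⁻ t in Ioi 0, μ {a | ENNReal.ofReal t < h a} := by
  set E : Set (α × ℝ) := {p | ENNReal.ofReal p.2 < h p.1}
  have hE : MeasurableSet E :=
    measurableSet_lt (ENNReal.measurable_ofReal.comp measurable_snd) (hh.comp measurable_fst)
  calc ∫⁻ a, h a ∂μ = ∫⁻ a, (∫⁻ t in Ioi (0 : ℝ), E.indicator 1 (a, t)) ∂μ := by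
        refine lintegral_congr fun a => ?_
        rw [← volume_restrict_Ioi_zero_ofReal_lt (h a)]
        exact (lintegral_indicator_one (measurable_prodMk_left hE)).symm
    _ = ∫⁻ t in Ioi 0, μ {a | ENNReal.ofReal t < h a} := by
        rw [lintegral_lintegral_swap (f := fun a t => E.indicator 1 (a, t))
          (measurable_one.indicator hE).aemeasurable]
        exact lintegral_congr fun t => lintegral_indicator_one (measurable_prodMk_right hE)

section PFunction

variable {Ω : Type*} [MeasurableSpace Ω] {P : Measure Ω} {f : Ω → ℝ≥0∞}

lemma measure_le_le_of_forall_pos (hp : ∀ ε : ℝ≥0∞, 0 < ε → P {ω | f ω ≤ ε} ≤ ε)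
    (x : ℝ≥0∞) : P {ω | f ω ≤ x} ≤ x := by
  refine ENNReal.le_of_forall_pos_le_add fun ε hε _ => ?_
  calc P {ω | f ω ≤ x} ≤ P {ω | f ω ≤ x + ε} :=
        measure_mono fun ω (hω : f ω ≤ x) => le_add_right hω
    _ ≤ x + ε := hp _ (by positivity)

lemma measure_preimage_le_of_isLowerSet [IsProbabilityMeasure P]
    (hp : ∀ ε : ℝ≥0∞, 0 < ε → P {ω | f ω ≤ ε} ≤ ε) {S : Set ℝ≥0∞} (hS : IsLowerSet S) :
    P (f ⁻¹' S) ≤ volume.restrict (Ioc 0 1) (ENNReal.ofReal ⁻¹' S) := by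
  set m := volume.restrict (Ioc 0 1) (ENNReal.ofReal ⁻¹' S)
  rcases le_or_gt 1 m with hm | hm
  · exact prob_le_one.trans hm
  have hSm : S ⊆ Iic m := by
    intro y hy
    by_contra hmy
    set z := min y 1
    have hz1 : z.toReal ≤ 1 := ENNReal.toReal_le_of_le_ofReal zero_le_one (by simp [z])
    have hzm : z ≤ m := calc
      z = volume (Ioc 0 z.toReal) := by simp [z]
      _ ≤ volume (ENNReal.ofReal ⁻¹' S ∩ Ioc 0 1) := measure_mono fun x hx =>
        ⟨hS ((ENNReal.ofReal_le_of_le_toReal hx.2).trans (min_le_left _ _)) hy,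
          hx.1, hx.2.trans hz1⟩
      _ ≤ m := Measure.le_restrict_apply _ _
    exact not_le.mpr (lt_min (not_le.mp hmy) hm) hzm
  exact (measure_mono (preimage_mono hSm)).trans (measure_le_le_of_forall_pos hp m)

theorem lintegral_comp_le_of_antitone [IsProbabilityMeasure P] (hf : Measurable f)
    (hp : ∀ ε : ℝ≥0∞, 0 < ε → P {ω | f ω ≤ ε} ≤ ε) {g : ℝ≥0∞ → ℝ≥0∞} (hg : Antitone g) :
    ∫⁻ ω, g (f ω) ∂P ≤ ∫⁻ x in Ioc 0 1, g (ENNReal.ofReal x) := by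
  rw [lintegral_eq_lintegral_meas_ofReal_lt P (h := fun ω => g (f ω)) (hg.measurable.comp hf),
    lintegral_eq_lintegral_meas_ofReal_lt _ (h := fun x => g (ENNReal.ofReal x))
      (hg.measurable.comp ENNReal.measurable_ofReal)]
  exact lintegral_mono fun t => measure_preimage_le_of_isLowerSet hp
    (S := {y | ENNReal.ofReal t < g y}) fun _ _ hba ha => ha.trans_le (hg hba)

theorem measure_min_one_inv_le [IsProbabilityMeasure P] (hf : AEMeasurable f P)
    (he : ∫⁻ ω, f ω ∂P ≤ 1) {ε : ℝ≥0∞} (hε : 0 < ε) : P {ω | min 1 (f ω)⁻¹ ≤ ε} ≤ ε := by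
  rcases le_or_gt 1 ε with h1 | h1
  · exact prob_le_one.trans h1
  have hset : {ω | min 1 (f ω)⁻¹ ≤ ε} = {ω | ε⁻¹ ≤ f ω} := by
    ext ω
    simp [not_le.mpr h1, ENNReal.inv_le_iff_inv_le]
  calc P {ω | min 1 (f ω)⁻¹ ≤ ε} = P {ω | ε⁻¹ ≤ f ω} := by rw [hset]
    _ ≤ (∫⁻ ω, f ω ∂P) / ε⁻¹ :=
      meas_ge_le_lintegral_div hf (by simpa using h1.ne_top) (by simpa using hε.ne')
    _ ≤ 1 / ε⁻¹ := by gcongr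
    _ = ε := by rw [one_div, inv_inv]

end PFunction

lemma antitone_const_mul_rpow {κ : ℝ} (hκ : κ < 1) :
    Antitone fun y : ℝ≥0∞ => ENNReal.ofReal κ * y ^ (κ - 1) := by
  intro a b hab
  have hneg : κ - 1 = -(1 - κ) := by ring
  dsimp only
  rw [hneg, ENNReal.rpow_neg, ENNReal.rpow_neg]
  gcongr

lemma lintegral_Ioc_zero_one_const_mul_rpow {κ : ℝ} (hκ : 0 < κ) :
    ∫⁻ x in Ioc (0 : ℝ) 1, ENNReal.ofReal κ * ENNReal.ofReal x ^ (κ - 1) = 1 := by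
  have hnonneg : ∀ x ∈ Ioc (0 : ℝ) 1, 0 ≤ κ * x ^ (κ - 1) := fun x hx => by
    have := hx.1; positivity
  calc ∫⁻ x in Ioc (0 : ℝ) 1, ENNReal.ofReal κ * ENNReal.ofReal x ^ (κ - 1)
      = ∫⁻ x in Ioc (0 : ℝ) 1, ENNReal.ofReal (κ * x ^ (κ - 1)) :=
        setLIntegral_congr_fun measurableSet_Ioc fun x hx => by
          rw [ENNReal.ofReal_mul hκ.le, ENNReal.ofReal_rpow_of_pos hx.1]
    _ = ENNReal.ofReal (∫ x in (0 : ℝ)..1, κ * x ^ (κ - 1)) := by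
        rw [intervalIntegral.integral_of_le zero_le_one, ofReal_integral_eq_lintegral_ofReal]
        · exact ((intervalIntegrable_iff_integrableOn_Ioc_of_le zero_le_one).mp
            (intervalIntegral.intervalIntegrable_rpow' (by linarith))).const_mul _
        · exact (ae_restrict_mem measurableSet_Ioc).mono hnonneg
    _ = 1 := by
        rw [intervalIntegral.integral_const_mul, integral_rpow (Or.inl (by linarith)),
          sub_add_cancel, Real.one_rpow, Real.zero_rpow hκ.ne', sub_zero,
          mul_one_div_cancel hκ.ne', ENNReal.ofReal_one]

/-- relation between p-functions and e-functions w.r.t. a probability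
measure `P` and `κ ∈ (0,1)`.
(a) If `f` is a p-function, then `ω ↦ κ · f(ω)^(κ-1)` is an e-function
(note that in `ℝ≥0∞`, `0 ^ (κ-1) = ∞` since `κ - 1 < 0`).
(b) If `f` is an e-function, then `ω ↦ min 1 (1/f(ω))` is a p-function. -/
theorem stmt0 {Ω : Type*} [MeasurableSpace Ω] (P : Measure Ω) [IsProbabilityMeasure P]
    (κ : ℝ) (hκ : κ ∈ Set.Ioo (0 : ℝ) 1) :
    (∀ f : Ω → ℝ≥0∞, Measurable f → (∀ ω, f ω ≤ 1) →
      (∀ ε : ℝ≥0∞, 0 < ε → P {ω | f ω ≤ ε} ≤ ε) →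
      ∫⁻ ω, ENNReal.ofReal κ * f ω ^ (κ - 1) ∂P ≤ 1) ∧
    (∀ f : Ω → ℝ≥0∞, Measurable f → ∫⁻ ω, f ω ∂P ≤ 1 →
      ∀ ε : ℝ≥0∞, 0 < ε → P {ω | min 1 (f ω)⁻¹ ≤ ε} ≤ ε) := by
  obtain ⟨hκ0, hκ1⟩ := hκ
  refine ⟨fun f hf _ hp => ?_, fun f hf he ε hε => measure_min_one_inv_le hf.aemeasurable he hε⟩
  calc ∫⁻ ω, ENNReal.ofReal κ * f ω ^ (κ - 1) ∂P
      ≤ ∫⁻ x in Ioc (0 : ℝ) 1, ENNReal.ofReal κ * ENNReal.ofReal x ^ (κ - 1) :=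
        lintegral_comp_le_of_antitone hf hp (antitone_const_mul_rpow hκ1)
    _ = 1 := lintegral_Ioc_zero_one_const_mul_rpow hκ0
end

section
/- Let (P_θ)_{θ∈Θ} be a statistical model on a sample space Ω, let Q be a probability measure on Θ, and let T be the joint probability measure on Ω × Θ defined by T(A×B) = ∫_B P_θ(A) Q(dθ). Then a measurable function f : Ω × Θ → [0,∞] is an e-function w.r.t. T if and only if there exist a conditional e-function g w.r.t. the model (P_θ) and an e-function h w.r.t. Q such that f(ω,θ) = g(ω;θ)·h(θ) for T-almost every (ω,θ). -/
open MeasureTheory ProbabilityTheory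
open scoped ENNReal

/-!
For the forward direction take `h θ := ∫ f(ω, θ) dP_θ(ω)` and `g := f / h`. By Tonelli,
`∫ h dQ` is the `T`-integral of `f`, and each `g(·; θ)` integrates to `h θ / h θ ≤ 1`.
The factorization `f = g · h` can only fail where `h θ = ∞`, a `Q`-null set since `∫ h dQ ≤ 1`,
or where `h θ = 0`, in which case `f(·, θ) = 0` holds `P_θ`-a.e.
Conversely, Tonelli gives `∫ g · h dT = ∫ (∫ g(ω; θ) dP_θ) h(θ) dQ ≤ ∫ h dQ ≤ 1`.
-/

section

variable {α β : Type*} [MeasurableSpace α] [MeasurableSpace β]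

theorem lintegral_div_lintegral_le_one {μ : Measure α} {f : α → ℝ≥0∞}
    (hf : AEMeasurable f μ) :
    ∫⁻ a, f a / ∫⁻ b, f b ∂μ ∂μ ≤ 1 := by
  simp only [div_eq_mul_inv]
  rw [lintegral_mul_const'' _ hf]
  exact ENNReal.mul_inv_le_one _

theorem ae_eq_div_lintegral_mul {μ : Measure α} {f : α → ℝ≥0∞} (hf : AEMeasurable f μ)
    (hfin : ∫⁻ a, f a ∂μ ≠ ∞) :
    ∀ᵐ a ∂μ, f a = f a / (∫⁻ b, f b ∂μ) * ∫⁻ b, f b ∂μ := by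
  by_cases h0 : ∫⁻ a, f a ∂μ = 0
  · filter_upwards [(lintegral_eq_zero_iff' hf).mp h0] with a ha
    simp [ha]
  · exact .of_forall fun a => (ENNReal.div_mul_cancel h0 hfin).symm

variable {κ : Kernel α β} {μ : Measure α} [SFinite μ] [IsSFiniteKernel κ]

theorem lintegral_map_swap_compProd {f : β × α → ℝ≥0∞} (hf : Measurable f) :
    ∫⁻ x, f x ∂((μ ⊗ₘ κ).map Prod.swap) = ∫⁻ a, ∫⁻ b, f (b, a) ∂κ a ∂μ := by
  rw [lintegral_map hf measurable_swap]
  exact Measure.lintegral_compProd (hf.comp measurable_swap)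

theorem ae_map_swap_compProd_iff {p : β × α → Prop} (hp : MeasurableSet {x | p x}) :
    (∀ᵐ x ∂((μ ⊗ₘ κ).map Prod.swap), p x) ↔ ∀ᵐ a ∂μ, ∀ᵐ b ∂κ a, p (b, a) := by
  rw [ae_map_iff measurable_swap.aemeasurable hp]
  exact Measure.ae_compProd_iff (measurable_swap hp)

theorem exists_ae_eq_mul_of_lintegral_map_swap_compProd_le_one {f : β × α → ℝ≥0∞}
    (hf : Measurable f) (hT : ∫⁻ x, f x ∂((μ ⊗ₘ κ).map Prod.swap) ≤ 1) :
    ∃ g : β × α → ℝ≥0∞, ∃ h : α → ℝ≥0∞,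
      Measurable g ∧ (∀ a, ∫⁻ b, g (b, a) ∂(κ a) ≤ 1) ∧
      Measurable h ∧ (∫⁻ a, h a ∂μ ≤ 1) ∧
      (∀ᵐ x ∂((μ ⊗ₘ κ).map Prod.swap), f x = g x * h x.2) := by
  set h : α → ℝ≥0∞ := fun a => ∫⁻ b, f (b, a) ∂κ a
  have hh : Measurable h := by fun_prop
  have hg : Measurable fun x : β × α => f x / h x.2 := by fun_prop
  have hμh : ∫⁻ a, h a ∂μ ≤ 1 := by rwa [lintegral_map_swap_compProd hf] at hT
  refine ⟨fun x => f x / h x.2, h, hg, fun a => lintegral_div_lintegral_le_one (by fun_prop),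
    hh, hμh, ?_⟩
  rw [ae_map_swap_compProd_iff (measurableSet_eq_fun hf (by fun_prop))]
  filter_upwards [ae_lt_top hh (hμh.trans_lt ENNReal.one_lt_top).ne] with a ha
  exact ae_eq_div_lintegral_mul (by fun_prop) ha.ne

theorem lintegral_map_swap_compProd_mul_le {g : β × α → ℝ≥0∞} {h : α → ℝ≥0∞}
    (hg : Measurable g) (hh : Measurable h) (hgκ : ∀ a, ∫⁻ b, g (b, a) ∂(κ a) ≤ 1) :
    ∫⁻ x, g x * h x.2 ∂((μ ⊗ₘ κ).map Prod.swap) ≤ ∫⁻ a, h a ∂μ := by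
  rw [lintegral_map_swap_compProd (by fun_prop)]
  refine lintegral_mono fun a => ?_
  dsimp only
  rw [lintegral_mul_const _ (by fun_prop : Measurable fun b => g (b, a))]
  exact mul_le_of_le_one_left' (hgκ a)

end

/-- for the Bayesian model given by a statistical model (Markov kernel)
`(P_θ)_{θ∈Θ}` and a prior probability measure `Q` on `Θ`, with joint probability
measure `T` on `Ω × Θ` (so `T(A×B) = ∫_B P_θ(A) Q(dθ)`, obtained here as the
swap-pushforward of the composition-product `Q ⊗ₘ P`), a measurable function
`f : Ω × Θ → [0,∞]` is an e-function w.r.t. `T` iff `f = g·h` `T`-a.e. for some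
conditional e-function `g` w.r.t. `(P_θ)` and some e-function `h` w.r.t. `Q`. -/
theorem stmt5 {Ω Θ : Type*} [MeasurableSpace Ω] [MeasurableSpace Θ]
    (P : Kernel Θ Ω) [IsMarkovKernel P]
    (Q : Measure Θ) [IsProbabilityMeasure Q]
    (f : Ω × Θ → ℝ≥0∞) (hf : Measurable f) :
    ∫⁻ x, f x ∂((Q.compProd P).map Prod.swap) ≤ 1 ↔
      ∃ g : Ω × Θ → ℝ≥0∞, ∃ h : Θ → ℝ≥0∞,
        Measurable g ∧ (∀ θ, ∫⁻ ω, g (ω, θ) ∂(P θ) ≤ 1) ∧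
        Measurable h ∧ (∫⁻ θ, h θ ∂Q ≤ 1) ∧
        (∀ᵐ x ∂((Q.compProd P).map Prod.swap), f x = g x * h x.2) := by
  refine ⟨exists_ae_eq_mul_of_lintegral_map_swap_compProd_le_one hf, ?_⟩
  rintro ⟨g, h, hg, hgP, hh, hhQ, hfgh⟩
  rw [lintegral_congr_ae hfgh]
  exact (lintegral_map_swap_compProd_mul_le hg hh hgP).trans hhQ
end

section
/- Let (P_θ)_{θ∈Θ} be a statistical model on Ω and (Q_π)_{π∈Π} a statistical model on Θ (a para-Bayesian model), and for each π ∈ Π let T_π be the probability measure on Ω × Θ with T_π(A×B) = ∫_B P_θ(A) Q_π(dθ). If g is a conditional e-function w.r.t. (P_θ) and h is an e-function w.r.t. the model (Q_π), then the function (ω,θ) ↦ g(ω;θ)·h(θ) satisfies ∫ g(ω;θ)h(θ) T_π(dω,dθ) ≤ 1 for every π ∈ Π, i.e. it is an e-function w.r.t. the joint statistical model (T_π). -/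
open MeasureTheory ProbabilityTheory
open scoped ENNReal

/-- para-Bayesian model given by Markov kernels `P : Θ → Ω` and
`Q : Γ → Θ`, with joint statistical model `T_π` on `Ω × Θ` (the swap-pushforward
of `(Q π) ⊗ₘ P`, so `T_π(A×B) = ∫_B P_θ(A) Q_π(dθ)`). If `g` is a conditional
e-function w.r.t. `(P_θ)` and `h` is an e-function w.r.t. `(Q_π)`, then
`(ω,θ) ↦ g(ω;θ)·h(θ)` is an e-function w.r.t. the joint model `(T_π)`. -/
theorem stmt9 {Ω Θ Γ : Type*} [MeasurableSpace Ω] [MeasurableSpace Θ] [MeasurableSpace Γ]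
    (P : Kernel Θ Ω) [IsMarkovKernel P]
    (Q : Kernel Γ Θ) [IsMarkovKernel Q]
    (g : Ω × Θ → ℝ≥0∞) (hg : Measurable g)
    (hge : ∀ θ, ∫⁻ ω, g (ω, θ) ∂(P θ) ≤ 1)
    (h : Θ → ℝ≥0∞) (hh : Measurable h)
    (hhe : ∀ π, ∫⁻ θ, h θ ∂(Q π) ≤ 1) :
    ∀ π, ∫⁻ x, g x * h x.2 ∂(((Q π).compProd P).map Prod.swap) ≤ 1 := by
  intro π
  rw [lintegral_map (by fun_prop) measurable_swap,
    Measure.lintegral_compProd (by fun_prop)]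
  calc ∫⁻ θ, ∫⁻ ω, g (Prod.swap (θ, ω)) * h (Prod.swap (θ, ω)).2 ∂(P θ) ∂(Q π)
      = ∫⁻ θ, (∫⁻ ω, g (ω, θ) ∂(P θ)) * h θ ∂(Q π) := by
        refine lintegral_congr fun θ => ?_
        simp only [Prod.swap_prod_mk]
        exact lintegral_mul_const _ (hg.comp (by fun_prop))
    _ ≤ ∫⁻ θ, 1 * h θ ∂(Q π) := lintegral_mono fun θ =>
        mul_le_mul_left (hge θ) _
    _ ≤ 1 := by simpa using hhe π
end

section
/- Fix N ≥ 1 and a measurable space Z, and let Ω = Z^N (functions from Fin N to Z with the product σ-algebra). If g : Ω → [0,∞] is measurable with ∫ g dP ≤ 1 for every exchangeable probability measure P on Ω, and h : Ω → [0,∞] is measurable, symmetric (h(ω∘π) = h(ω) for every permutation π of {1,…,N} and every ω), and satisfies ∫ h dQ^N ≤ 1 for every probability measure Q on Z (Q^N being the N-fold product measure), then ∫ g·h dQ^N ≤ 1 for every probability measure Q on Z. -/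
open MeasureTheory
open scoped ENNReal

lemma map_withDensity_comp {α β : Type*} [MeasurableSpace α] [MeasurableSpace β]
    (e : α ≃ᵐ β) (μ : Measure α) (f : β → ℝ≥0∞) (hf : Measurable f) :
    (μ.withDensity (f ∘ e)).map e = (μ.map e).withDensity f := by
  ext s hs
  rw [Measure.map_apply e.measurable hs, withDensity_apply _ (e.measurable hs),
    withDensity_apply _ hs, Measure.restrict_map e.measurable hs,
    lintegral_map hf e.measurable]
  rfl

/-- let `Ω = Z^N`. If `g` is an e-function w.r.t. every exchangeable
probability measure on `Ω` and `h` is a symmetric (permutation-invariant) function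
that is an e-function w.r.t. every IID measure `Q^N`, then `g·h` is an e-function
w.r.t. every IID measure `Q^N`. -/
theorem stmt11 {Z : Type*} [MeasurableSpace Z] (N : ℕ) (hN : 1 ≤ N)
    (g h : (Fin N → Z) → ℝ≥0∞)
    (hg : Measurable g)
    (hgE : ∀ (P : Measure (Fin N → Z)) [IsProbabilityMeasure P],
      (∀ π : Equiv.Perm (Fin N), P.map (fun ω i => ω (π i)) = P) →
      ∫⁻ ω, g ω ∂P ≤ 1)
    (hh : Measurable h)
    (hsym : ∀ (π : Equiv.Perm (Fin N)) (ω : Fin N → Z), h (fun i => ω (π i)) = h ω)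
    (hhE : ∀ (Q : Measure Z) [IsProbabilityMeasure Q],
      ∫⁻ ω, h ω ∂(Measure.pi fun _ : Fin N => Q) ≤ 1) :
    ∀ (Q : Measure Z) [IsProbabilityMeasure Q],
      ∫⁻ ω, g ω * h ω ∂(Measure.pi fun _ : Fin N => Q) ≤ 1 := by
  intro Q _
  set μN : Measure (Fin N → Z) := Measure.pi fun _ : Fin N => Q with hμN
  have hc : ∫⁻ ω, h ω ∂μN ≤ 1 := hhE Q
  set c : ℝ≥0∞ := ∫⁻ ω, h ω ∂μN with hcdef
  set P : Measure (Fin N → Z) := μN.withDensity h + (1 - c) • μN with hP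
  have hPprob : IsProbabilityMeasure P := by
    constructor
    simp only [hP, Measure.add_apply, Measure.smul_apply, smul_eq_mul]
    rw [withDensity_apply _ MeasurableSet.univ, Measure.restrict_univ]
    have : μN Set.univ = 1 := measure_univ
    rw [this, mul_one, ← hcdef, add_comm, tsub_add_cancel_of_le hc]
  have hexch : ∀ π : Equiv.Perm (Fin N), P.map (fun ω i => ω (π i)) = P := by
    intro π
    set e : (Fin N → Z) ≃ᵐ (Fin N → Z) :=
      MeasurableEquiv.piCongrLeft (fun _ : Fin N => Z) π.symm with he
    have hecoe : (fun (ω : Fin N → Z) i => ω (π i)) = ⇑e := by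
      funext ω i
      have : e ω (π.symm (π i)) = ω (π i) :=
        Equiv.piCongrLeft_apply_apply (fun _ : Fin N => Z) π.symm ω (π i)
      simpa using this.symm
    have hmp : μN.map e = μN := by
      have := MeasureTheory.measurePreserving_piCongrLeft
        (fun _ : Fin N => Q) π.symm
      exact this.map_eq
    have hhe : h ∘ e = h := by
      funext ω
      have : (⇑e) ω = fun i => ω (π i) := by rw [← hecoe]
      rw [Function.comp_apply, this, hsym π ω]
    rw [hecoe, hP, Measure.map_add _ _ e.measurable, Measure.map_smul]
    rw [← hhe, map_withDensity_comp e μN h hh, hmp, hhe]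
  have hgle := hgE P hexch
  have hexpand : ∫⁻ ω, g ω ∂P
      = ∫⁻ ω, h ω * g ω ∂μN + (1 - c) * ∫⁻ ω, g ω ∂μN := by
    rw [hP, lintegral_add_measure, lintegral_smul_measure,
      lintegral_withDensity_eq_lintegral_mul μN hh hg]
    rfl
  calc ∫⁻ ω, g ω * h ω ∂μN = ∫⁻ ω, h ω * g ω ∂μN := by
        simp_rw [mul_comm]
    _ ≤ ∫⁻ ω, h ω * g ω ∂μN + (1 - c) * ∫⁻ ω, g ω ∂μN := le_self_add
    _ = ∫⁻ ω, g ω ∂P := hexpand.symm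
    _ ≤ 1 := hgle
end

section
/- Fix N ≥ 1 and a measurable space Z, and let Ω = Z^N. If f : Ω → [0,∞] is measurable with ∫ f dQ^N ≤ 1 for every probability measure Q on Z, then there exist measurable g, h : Ω → [0,∞] such that: (i) ∫ g dP ≤ 1 for every exchangeable probability measure P on Ω; (ii) h is symmetric (invariant under coordinate permutations) and ∫ h dQ^N ≤ 1 for every probability measure Q on Z; (iii) for every probability measure Q on Z, f(ω) = g(ω)·h(ω) for Q^N-almost every ω. Moreover one can take h(ω) = (1/N!) Σ_π f(ω∘π), the average of f over all permutations π of {1,…,N}, and g = f/h (with 0/0 := 0). -/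
/-!
Averaging `f` over the `N!` coordinate permutations gives a symmetric `h` with `f ≤ N! h`, and
since every `Q^N` is exchangeable, `∫ h dQ^N = ∫ f dQ^N ≤ 1`. As `h` is symmetric, the
permutation average of `g = f / h` is `h / h ≤ 1`, and an exchangeable `P` integrates `g` and its
permutation average alike, so `∫ g dP ≤ 1`. Finally `f = g h` wherever `h` is finite (where
`h = 0` forces `f = 0`), which is `Q^N`-almost everywhere because `∫ h dQ^N ≤ 1`.
-/

open MeasureTheory
open scoped ENNReal

namespace MeasureTheory

variable {ι Z : Type*}

section Measurable

variable [MeasurableSpace Z]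

lemma measurable_comp_perm (π : Equiv.Perm ι) :
    Measurable fun (ω : ι → Z) i => ω (π i) :=
  measurable_pi_lambda _ fun i => measurable_pi_apply (π i)

lemma Measure.map_comp_perm_pi [Fintype ι] (Q : Measure Z) [SigmaFinite Q] (π : Equiv.Perm ι) :
    (Measure.pi fun _ : ι => Q).map (fun ω i => ω (π i)) = Measure.pi fun _ => Q := by
  convert Measure.pi_map_piCongrLeft π.symm (fun _ : ι => Q) using 2
  ext ω i
  simpa using
    (MeasurableEquiv.piCongrLeft_apply_apply (β := fun _ : ι => Z) π.symm ω (π i)).symm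

end Measurable

variable [Fintype ι] [DecidableEq ι]

noncomputable def permAvg (F : (ι → Z) → ℝ≥0∞) (ω : ι → Z) : ℝ≥0∞ :=
  (Fintype.card (Equiv.Perm ι) : ℝ≥0∞)⁻¹ * ∑ π : Equiv.Perm ι, F fun i => ω (π i)

variable {F : (ι → Z) → ℝ≥0∞}

lemma permAvg_comp_perm (σ : Equiv.Perm ι) (ω : ι → Z) :
    permAvg F (fun i => ω (σ i)) = permAvg F ω := by
  unfold permAvg
  congr 1
  exact Fintype.sum_equiv (Equiv.mulLeft σ) _ _ fun π => by simp [Equiv.Perm.mul_apply]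

lemma card_perm_mul_permAvg (ω : ι → Z) :
    (Fintype.card (Equiv.Perm ι) : ℝ≥0∞) * permAvg F ω = ∑ π : Equiv.Perm ι, F fun i => ω (π i) :=
  ENNReal.mul_inv_cancel_left (Nat.cast_ne_zero.mpr Fintype.card_ne_zero)
    (ENNReal.natCast_ne_top _)

lemma le_card_perm_mul_permAvg (ω : ι → Z) :
    F ω ≤ (Fintype.card (Equiv.Perm ι) : ℝ≥0∞) * permAvg F ω := by
  rw [card_perm_mul_permAvg]
  exact Finset.single_le_sum (f := fun π : Equiv.Perm ι => F fun i => ω (π i))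
    (fun _ _ => zero_le) (Finset.mem_univ 1)

lemma permAvg_div_permAvg_le_one (ω : ι → Z) :
    permAvg (fun ω => F ω / permAvg F ω) ω ≤ 1 := by
  calc permAvg (fun ω => F ω / permAvg F ω) ω
      = permAvg F ω * (permAvg F ω)⁻¹ := by
        change _ * ∑ π : Equiv.Perm ι, F _ / permAvg F (fun i => ω (π i)) = _
        simp only [permAvg_comp_perm, div_eq_mul_inv, ← Finset.sum_mul, ← mul_assoc]
        rfl
    _ ≤ 1 := ENNReal.mul_inv_le_one _

lemma div_permAvg_mul_permAvg {ω : ι → Z} (hω : permAvg F ω ≠ ⊤) :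
    F ω / permAvg F ω * permAvg F ω = F ω := by
  by_cases h0 : permAvg F ω = 0
  · have hF0 : F ω = 0 := by simpa [h0] using le_card_perm_mul_permAvg (F := F) ω
    simp [hF0]
  · exact ENNReal.div_mul_cancel h0 hω

variable [MeasurableSpace Z]

lemma measurable_permAvg (hF : Measurable F) : Measurable (permAvg F) :=
  (Finset.measurable_sum _ fun π _ => hF.comp (measurable_comp_perm π)).const_mul _

lemma lintegral_permAvg {P : Measure (ι → Z)}
    (hP : ∀ π : Equiv.Perm ι, P.map (fun ω i => ω (π i)) = P) (hF : Measurable F) :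
    ∫⁻ ω, permAvg F ω ∂P = ∫⁻ ω, F ω ∂P := by
  have hperm (π : Equiv.Perm ι) : ∫⁻ ω, F (fun i => ω (π i)) ∂P = ∫⁻ ω, F ω ∂P := by
    rw [← lintegral_map hF (measurable_comp_perm π), hP π]
  have hFπ (π : Equiv.Perm ι) : Measurable fun ω : ι → Z => F fun i => ω (π i) :=
    hF.comp (measurable_comp_perm π)
  simp only [permAvg]
  rw [lintegral_const_mul _ (Finset.measurable_sum _ fun π _ => hFπ π),
    lintegral_finsetSum _ fun π _ => hFπ π]
  simp only [hperm, Finset.sum_const, Finset.card_univ, nsmul_eq_mul]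
  exact ENNReal.inv_mul_cancel_left (Nat.cast_ne_zero.mpr Fintype.card_ne_zero)
    (ENNReal.natCast_ne_top _)

lemma lintegral_div_permAvg_le_one {P : Measure (ι → Z)} [IsProbabilityMeasure P]
    (hP : ∀ π : Equiv.Perm ι, P.map (fun ω i => ω (π i)) = P) (hF : Measurable F) :
    ∫⁻ ω, F ω / permAvg F ω ∂P ≤ 1 := by
  calc ∫⁻ ω, F ω / permAvg F ω ∂P
      = ∫⁻ ω, permAvg (fun ω => F ω / permAvg F ω) ω ∂P :=
        (lintegral_permAvg hP (hF.div (measurable_permAvg hF))).symm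
    _ ≤ ∫⁻ _, 1 ∂P := lintegral_mono permAvg_div_permAvg_le_one
    _ = 1 := by simp

end MeasureTheory

theorem stmt12_general {Z : Type*} [MeasurableSpace Z] (N : ℕ)
    (f : (Fin N → Z) → ℝ≥0∞) (hf : Measurable f)
    (hfE : ∀ (Q : Measure Z) [IsProbabilityMeasure Q],
      ∫⁻ ω, f ω ∂(Measure.pi fun _ : Fin N => Q) ≤ 1) :
    ∃ g h : (Fin N → Z) → ℝ≥0∞,
      Measurable g ∧
      (∀ (P : Measure (Fin N → Z)) [IsProbabilityMeasure P],
        (∀ π : Equiv.Perm (Fin N), P.map (fun ω i => ω (π i)) = P) →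
        ∫⁻ ω, g ω ∂P ≤ 1) ∧
      Measurable h ∧
      (∀ (π : Equiv.Perm (Fin N)) (ω : Fin N → Z), h (fun i => ω (π i)) = h ω) ∧
      (∀ (Q : Measure Z) [IsProbabilityMeasure Q],
        ∫⁻ ω, h ω ∂(Measure.pi fun _ : Fin N => Q) ≤ 1) ∧
      (∀ (Q : Measure Z) [IsProbabilityMeasure Q],
        ∀ᵐ ω ∂(Measure.pi fun _ : Fin N => Q), f ω = g ω * h ω) ∧
      h = (fun ω => (N.factorial : ℝ≥0∞)⁻¹ *
        ∑ π : Equiv.Perm (Fin N), f (fun i => ω (π i))) ∧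
      g = (fun ω => f ω / h ω) := by
  have hAvg : permAvg f = fun ω => (N.factorial : ℝ≥0∞)⁻¹ *
      ∑ π : Equiv.Perm (Fin N), f (fun i => ω (π i)) := by
    ext ω
    simp only [permAvg, Fintype.card_perm, Fintype.card_fin]
  have hAvgE (Q : Measure Z) [IsProbabilityMeasure Q] :
      ∫⁻ ω, permAvg f ω ∂(Measure.pi fun _ : Fin N => Q) ≤ 1 :=
    (lintegral_permAvg (Measure.map_comp_perm_pi Q) hf).trans_le (hfE Q)
  refine ⟨_, permAvg f, hf.div (measurable_permAvg hf),
    fun P _ hP => lintegral_div_permAvg_le_one hP hf, measurable_permAvg hf,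
    permAvg_comp_perm, hAvgE, fun Q _ => ?_, hAvg, rfl⟩
  filter_upwards [ae_lt_top (measurable_permAvg hf) ((hAvgE Q).trans_lt ENNReal.one_lt_top).ne]
    with ω hω
  exact (div_permAvg_mul_permAvg hω.ne).symm

/-- let `Ω = Z^N`. If `f` is an e-function w.r.t. every IID measure
`Q^N`, then there are a measurable `g` that is an e-function w.r.t. every
exchangeable probability measure on `Ω` and a measurable symmetric `h` that is an
e-function w.r.t. every IID measure, such that `f = g·h` `Q^N`-a.e. for every `Q`;
moreover one can take `h(ω) = (1/N!) Σ_π f(ω∘π)` and `g = f/h` (`0/0 = 0` in `ℝ≥0∞`). -/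
theorem stmt12 {Z : Type*} [MeasurableSpace Z] (N : ℕ) (hN : 1 ≤ N)
    (f : (Fin N → Z) → ℝ≥0∞) (hf : Measurable f)
    (hfE : ∀ (Q : Measure Z) [IsProbabilityMeasure Q],
      ∫⁻ ω, f ω ∂(Measure.pi fun _ : Fin N => Q) ≤ 1) :
    ∃ g h : (Fin N → Z) → ℝ≥0∞,
      Measurable g ∧
      (∀ (P : Measure (Fin N → Z)) [IsProbabilityMeasure P],
        (∀ π : Equiv.Perm (Fin N), P.map (fun ω i => ω (π i)) = P) →
        ∫⁻ ω, g ω ∂P ≤ 1) ∧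
      Measurable h ∧
      (∀ (π : Equiv.Perm (Fin N)) (ω : Fin N → Z), h (fun i => ω (π i)) = h ω) ∧
      (∀ (Q : Measure Z) [IsProbabilityMeasure Q],
        ∫⁻ ω, h ω ∂(Measure.pi fun _ : Fin N => Q) ≤ 1) ∧
      (∀ (Q : Measure Z) [IsProbabilityMeasure Q],
        ∀ᵐ ω ∂(Measure.pi fun _ : Fin N => Q), f ω = g ω * h ω) ∧
      h = (fun ω => (N.factorial : ℝ≥0∞)⁻¹ *
        ∑ π : Equiv.Perm (Fin N), f (fun i => ω (π i))) ∧
      g = (fun ω => f ω / h ω) :=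
  stmt12_general N f hf hfE
end

section
/- Fix N ≥ 1 and let Ω = {0,1}^N. For p ∈ [0,1], let B_p be the Bernoulli measure on Ω given by B_p({ω}) = p^{+ω}(1−p)^{N−+ω}, where +ω is the number of 1s in ω. Then a function f : Ω → [0,∞] satisfies ∫ f dB_p ≤ 1 for every p ∈ [0,1] if and only if there exist g : Ω → [0,∞] and h : {0,…,N} → [0,∞] such that: (i) ∫ g dP ≤ 1 for every exchangeable probability measure P on Ω; (ii) Σ_{k=0}^N binom(N,k) p^k (1−p)^{N−k} h(k) ≤ 1 for every p ∈ [0,1]; (iii) for every p ∈ [0,1], f(ω) = g(ω)·h(+ω) for B_p-almost every ω. -/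
open MeasureTheory
open scoped ENNReal

/-- `cnt ω` is the number of 1s (`true`s) in the binary sequence `ω`. -/
def cnt {N : ℕ} (ω : Fin N → Bool) : ℕ := (Finset.univ.filter fun i => ω i = true).card

/-- The Bernoulli measure `B_p` on `{0,1}^N`: `B_p({ω}) = p^{+ω} (1-p)^{N-+ω}`. -/
noncomputable def bern (N : ℕ) (p : ℝ≥0∞) : Measure (Fin N → Bool) :=
  ∑ ω : Fin N → Bool, (p ^ cnt ω * (1 - p) ^ (N - cnt ω)) • Measure.dirac ω

/-! Everything is governed by the level sums `∑_{+ω = k} f ω`. The Bernoulli integral is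
`∑_k p^k (1-p)^(N-k) ∑_{+ω = k} f ω`. An exchangeable measure is constant on each level
`{+ω = k}`, and the uniform distributions on the levels are exchangeable, so `g` has expectation
at most `1` under every exchangeable `P` iff `∑_{+ω = k} g ω ≤ binom(N,k)` for all `k`.
Hence one may take for `h(k)` the mean of `f` on level `k` and `g = f / h(+ω)`; conversely the
level sums of `g · h(+·)` are at most `binom(N,k) h(k)`. -/

open ProbabilityTheory Finset

section

variable {N : ℕ}

lemma cnt_le (ω : Fin N → Bool) : cnt ω ≤ N :=
  (card_filter_le _ _).trans_eq (card_fin N)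

lemma cnt_comp_perm (ω : Fin N → Bool) (π : Equiv.Perm (Fin N)) :
    cnt (fun i => ω (π i)) = cnt ω := by
  simp only [cnt, ← Fintype.card_subtype]
  exact Fintype.card_congr (π.subtypeEquiv fun _ => Iff.rfl)

lemma card_filter_eq_false (ω : Fin N → Bool) : #{i | ω i = false} = N - cnt ω := by
  have := card_filter_add_card_filter_not (s := univ) (fun i => ω i = true)
  simp only [Bool.not_eq_true, card_univ, Fintype.card_fin] at this
  rw [cnt]
  omega

lemma exists_perm_of_cnt_eq {ω ω' : Fin N → Bool} (h : cnt ω = cnt ω') :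
    ∃ π : Equiv.Perm (Fin N), ∀ i, ω' (π i) = ω i := by
  have hcard : ∀ b, Fintype.card {i // ω i = b} = Fintype.card {i // ω' i = b} := by
    intro b
    simp only [Fintype.card_subtype]
    cases b
    · rw [card_filter_eq_false, card_filter_eq_false, h]
    · exact h
  exact ⟨Equiv.ofFiberEquiv fun b => Fintype.equivOfCardEq (hcard b),
    Equiv.ofFiberEquiv_map _⟩

def level (N k : ℕ) : Finset (Fin N → Bool) := {ω | cnt ω = k}

@[simp]
lemma mem_level {k : ℕ} {ω : Fin N → Bool} : ω ∈ level N k ↔ cnt ω = k := by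
  simp [level]

lemma card_level (k : ℕ) : #(level N k) = N.choose k := by
  have hpow := card_powersetCard k (univ : Finset (Fin N))
  rw [card_univ, Fintype.card_fin] at hpow
  rw [← hpow]
  refine card_nbij' (fun ω => ({i | ω i = true} : Finset (Fin N))) (fun s i => i ∈ s)
    ?_ ?_ ?_ ?_
  · intro ω hω; simpa [cnt] using hω
  · intro s hs; simp_all [cnt, mem_powersetCard]
  · intro ω _; funext i; simp
  · intro s _; ext i; simp

lemma sum_sum_level {M : Type*} [AddCommMonoid M] (F : (Fin N → Bool) → M) :
    ∑ k ∈ range (N + 1), ∑ ω ∈ level N k, F ω = ∑ ω, F ω :=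
  sum_fiberwise_of_maps_to (fun ω _ => mem_range_succ_iff.2 (cnt_le ω)) F

def IsExchangeable (P : Measure (Fin N → Bool)) : Prop :=
  ∀ π : Equiv.Perm (Fin N), P.map (fun ω i => ω (π i)) = P

lemma map_perm_apply_singleton (P : Measure (Fin N → Bool)) (π : Equiv.Perm (Fin N))
    (ω : Fin N → Bool) : P.map (fun ω i => ω (π i)) {ω} = P {fun i => ω (π.symm i)} := by
  rw [Measure.map_apply .of_discrete .of_discrete]
  congr 1
  ext x
  simp only [Set.mem_preimage, Set.mem_singleton_iff, funext_iff]
  exact ⟨fun h i => by simpa using h (π.symm i), fun h i => by simp [h]⟩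

lemma isExchangeable_iff_measure_singleton {P : Measure (Fin N → Bool)} :
    IsExchangeable P ↔ ∀ ω ω', cnt ω = cnt ω' → P {ω} = P {ω'} := by
  refine ⟨fun hP ω ω' h => ?_, fun hP π => Measure.ext_of_singleton fun ω => ?_⟩
  · obtain ⟨π, hπ⟩ := exists_perm_of_cnt_eq h
    have hω' : ω' = fun i => ω (π.symm i) := funext fun i => by simp [← hπ]
    rw [hω', ← map_perm_apply_singleton, hP]
  · rw [map_perm_apply_singleton, hP]
    simpa using cnt_comp_perm ω π.symm

lemma isExchangeable_uniformOn_level (k : ℕ) :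
    IsExchangeable (uniformOn (level N k : Set (Fin N → Bool))) := by
  refine isExchangeable_iff_measure_singleton.2 fun ω ω' h => ?_
  simp only [← coe_singleton, uniformOn_apply_finset, inter_singleton, mem_level, h]
  split_ifs <;> simp

lemma Finset.sum_mul_le_sum_of_forall_eq {α : Type*} {s : Finset α} {g w : α → ℝ≥0∞}
    (hw : ∀ x ∈ s, ∀ y ∈ s, w x = w y) (hg : ∑ x ∈ s, g x ≤ #s) :
    ∑ x ∈ s, g x * w x ≤ ∑ x ∈ s, w x := by
  obtain rfl | ⟨x₀, hx₀⟩ := s.eq_empty_or_nonempty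
  · simp
  calc ∑ x ∈ s, g x * w x = (∑ x ∈ s, g x) * w x₀ := by
        rw [sum_mul]; exact sum_congr rfl fun x hx => by rw [hw x hx x₀ hx₀]
    _ ≤ #s * w x₀ := by gcongr
    _ = ∑ x ∈ s, w x := by
        rw [← nsmul_eq_mul, ← sum_const]; exact sum_congr rfl fun x hx => hw x₀ hx₀ x hx

lemma lintegral_uniformOn_finset {α : Type*} [Fintype α] [DecidableEq α] [MeasurableSpace α]
    [MeasurableSingletonClass α] (s : Finset α) (g : α → ℝ≥0∞) :
    ∫⁻ x, g x ∂uniformOn (s : Set α) = (∑ x ∈ s, g x) / #s := by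
  simp only [lintegral_fintype, ← coe_singleton, uniformOn_apply_finset, inter_singleton,
    apply_ite card, card_singleton, card_empty]
  simp [mul_ite, div_eq_mul_inv, sum_mul]

theorem forall_isExchangeable_lintegral_le_one_iff (g : (Fin N → Bool) → ℝ≥0∞) :
    (∀ (P : Measure (Fin N → Bool)) [IsProbabilityMeasure P], IsExchangeable P →
      ∫⁻ ω, g ω ∂P ≤ 1) ↔ ∀ k ≤ N, ∑ ω ∈ level N k, g ω ≤ N.choose k := by
  constructor
  · intro hg k hk
    have hne : (level N k).Nonempty := by
      rw [← card_pos, card_level]; exact Nat.choose_pos hk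
    have := isProbabilityMeasure_uniformOn (level N k).finite_toSet hne
    have hC : (N.choose k : ℝ≥0∞) ≠ 0 := by exact_mod_cast (Nat.choose_pos hk).ne'
    have hint := hg _ (isExchangeable_uniformOn_level k)
    rwa [lintegral_uniformOn_finset, card_level, ENNReal.div_le_iff hC (by simp), one_mul]
      at hint
  · intro hg P _ hP
    rw [isExchangeable_iff_measure_singleton] at hP
    calc ∫⁻ ω, g ω ∂P = ∑ k ∈ range (N + 1), ∑ ω ∈ level N k, g ω * P {ω} := by
          rw [lintegral_fintype, sum_sum_level]
      _ ≤ ∑ k ∈ range (N + 1), ∑ ω ∈ level N k, P {ω} := by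
          refine sum_le_sum fun k hk => ?_
          refine sum_mul_le_sum_of_forall_eq (fun x hx y hy => ?_) ?_
          · exact hP x y ((mem_level.1 hx).trans (mem_level.1 hy).symm)
          · rw [card_level]; exact hg k (mem_range_succ_iff.1 hk)
      _ = 1 := by rw [sum_sum_level, sum_measure_singleton, coe_univ, measure_univ]

lemma lintegral_bern_eq_sum (p : ℝ≥0∞) (f : (Fin N → Bool) → ℝ≥0∞) :
    ∫⁻ ω, f ω ∂bern N p = ∑ ω, p ^ cnt ω * (1 - p) ^ (N - cnt ω) * f ω := by
  simp [bern, lintegral_dirac, mul_assoc]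

lemma lintegral_bern_eq_sum_level (p : ℝ≥0∞) (f : (Fin N → Bool) → ℝ≥0∞) :
    ∫⁻ ω, f ω ∂bern N p =
      ∑ k ∈ range (N + 1), p ^ k * (1 - p) ^ (N - k) * ∑ ω ∈ level N k, f ω := by
  rw [lintegral_bern_eq_sum, ← sum_sum_level]
  refine sum_congr rfl fun k _ => ?_
  rw [mul_sum]
  exact sum_congr rfl fun ω hω => by rw [mem_level.1 hω]

lemma apply_ne_top_of_lintegral_bern_ne_top {p : ℝ≥0∞} (hp₀ : p ≠ 0) (hp₁ : p < 1)
    {f : (Fin N → Bool) → ℝ≥0∞} (hf : ∫⁻ ω, f ω ∂bern N p ≠ ∞) (ω : Fin N → Bool) :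
    f ω ≠ ∞ := by
  rw [lintegral_bern_eq_sum, ENNReal.sum_ne_top] at hf
  have hc : p ^ cnt ω * (1 - p) ^ (N - cnt ω) ≠ 0 :=
    mul_ne_zero (pow_ne_zero _ hp₀) (pow_ne_zero _ (tsub_pos_of_lt hp₁).ne')
  exact fun h => hf ω (mem_univ ω) (by rw [h, ENNReal.mul_top hc])

lemma lintegral_bern_mul_le {g : (Fin N → Bool) → ℝ≥0∞}
    (hg : ∀ k ≤ N, ∑ ω ∈ level N k, g ω ≤ N.choose k) (h : ℕ → ℝ≥0∞) (p : ℝ≥0∞) :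
    ∫⁻ ω, g ω * h (cnt ω) ∂bern N p ≤
      ∑ k ∈ range (N + 1), (N.choose k : ℝ≥0∞) * p ^ k * (1 - p) ^ (N - k) * h k := by
  rw [lintegral_bern_eq_sum_level]
  refine sum_le_sum fun k hk => ?_
  calc p ^ k * (1 - p) ^ (N - k) * ∑ ω ∈ level N k, g ω * h (cnt ω)
      = p ^ k * (1 - p) ^ (N - k) * h k * ∑ ω ∈ level N k, g ω := by
        rw [mul_sum, mul_sum]
        exact sum_congr rfl fun ω hω => by rw [mem_level.1 hω]; ring
    _ ≤ p ^ k * (1 - p) ^ (N - k) * h k * N.choose k := by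
        gcongr; exact hg k (mem_range_succ_iff.1 hk)
    _ = _ := by ring

noncomputable def levelMean (f : (Fin N → Bool) → ℝ≥0∞) (k : ℕ) : ℝ≥0∞ :=
  (∑ ω ∈ level N k, f ω) / N.choose k

lemma choose_mul_levelMean (f : (Fin N → Bool) → ℝ≥0∞) {k : ℕ} (hk : k ≤ N) :
    N.choose k * levelMean f k = ∑ ω ∈ level N k, f ω :=
  ENNReal.mul_div_cancel (by exact_mod_cast (Nat.choose_pos hk).ne') (by simp)

lemma sum_choose_mul_levelMean (f : (Fin N → Bool) → ℝ≥0∞) (p : ℝ≥0∞) :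
    ∑ k ∈ range (N + 1), (N.choose k : ℝ≥0∞) * p ^ k * (1 - p) ^ (N - k) * levelMean f k =
      ∫⁻ ω, f ω ∂bern N p := by
  rw [lintegral_bern_eq_sum_level]
  refine sum_congr rfl fun k hk => ?_
  rw [← choose_mul_levelMean f (mem_range_succ_iff.1 hk)]
  ring

lemma sum_level_div_levelMean_le (f : (Fin N → Bool) → ℝ≥0∞) {k : ℕ} (hk : k ≤ N) :
    ∑ ω ∈ level N k, f ω / levelMean f (cnt ω) ≤ N.choose k :=
  calc ∑ ω ∈ level N k, f ω / levelMean f (cnt ω)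
    _ = (∑ ω ∈ level N k, f ω) / levelMean f k := by
        simp only [div_eq_mul_inv, sum_mul]
        exact sum_congr rfl fun ω hω => by rw [mem_level.1 hω]
    _ ≤ N.choose k := ENNReal.div_le_of_le_mul (choose_mul_levelMean f hk).ge

lemma div_levelMean_mul_levelMean {f : (Fin N → Bool) → ℝ≥0∞} (hf : ∀ ω, f ω ≠ ∞)
    (ω : Fin N → Bool) : f ω / levelMean f (cnt ω) * levelMean f (cnt ω) = f ω := by
  obtain h0 | h0 := eq_or_ne (levelMean f (cnt ω)) 0
  · have hsum : ∑ ω' ∈ level N (cnt ω), f ω' = 0 := by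
      simpa [levelMean, ENNReal.div_eq_zero_iff] using h0
    simp [sum_eq_zero_iff.1 hsum ω (mem_level.2 rfl)]
  · exact ENNReal.div_mul_cancel h0
      (ENNReal.div_lt_top (ENNReal.sum_ne_top.2 fun ω _ => hf ω)
        (by simpa using (Nat.choose_pos (cnt_le ω)).ne')).ne

end

theorem stmt15_general (N : ℕ) (f : (Fin N → Bool) → ℝ≥0∞) :
    (∀ p : ℝ≥0∞, p ≤ 1 → ∫⁻ ω, f ω ∂(bern N p) ≤ 1) ↔
    (∃ g : (Fin N → Bool) → ℝ≥0∞, ∃ h : ℕ → ℝ≥0∞,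
      (∀ (P : Measure (Fin N → Bool)) [IsProbabilityMeasure P],
        (∀ π : Equiv.Perm (Fin N), P.map (fun ω i => ω (π i)) = P) →
        ∫⁻ ω, g ω ∂P ≤ 1) ∧
      (∀ p : ℝ≥0∞, p ≤ 1 →
        ∑ k ∈ Finset.range (N + 1),
          (N.choose k : ℝ≥0∞) * p ^ k * (1 - p) ^ (N - k) * h k ≤ 1) ∧
      (∀ p : ℝ≥0∞, p ≤ 1 → ∀ᵐ ω ∂(bern N p), f ω = g ω * h (cnt ω))) := by
  constructor
  · intro hf
    have hfin : ∀ ω, f ω ≠ ∞ := apply_ne_top_of_lintegral_bern_ne_top (by simp)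
      (by norm_num) ((hf 2⁻¹ (by simp)).trans_lt ENNReal.one_lt_top).ne
    refine ⟨fun ω => f ω / levelMean f (cnt ω), levelMean f, ?_, ?_, ?_⟩
    · exact (forall_isExchangeable_lintegral_le_one_iff _).2 fun k hk =>
        sum_level_div_levelMean_le f hk
    · intro p hp
      exact (sum_choose_mul_levelMean f p).trans_le (hf p hp)
    · exact fun p _ => ae_of_all _ fun ω => (div_levelMean_mul_levelMean hfin ω).symm
  · rintro ⟨g, h, hg, hh, hfgh⟩ p hp
    calc ∫⁻ ω, f ω ∂bern N p
      _ = ∫⁻ ω, g ω * h (cnt ω) ∂bern N p := lintegral_congr_ae (hfgh p hp)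
      _ ≤ _ := lintegral_bern_mul_le ((forall_isExchangeable_lintegral_le_one_iff g).1 hg) h p
      _ ≤ 1 := hh p hp

/-- `f : {0,1}^N → [0,∞]` satisfies `∫ f dB_p ≤ 1` for every
`p ∈ [0,1]` iff there are `g : {0,1}^N → [0,∞]` and `h : {0,…,N} → [0,∞]` such
that (i) `∫ g dP ≤ 1` for every exchangeable probability measure `P`, (ii) `h` is
an e-function w.r.t. every binomial measure, and (iii) for every `p ∈ [0,1]`,
`f(ω) = g(ω)·h(+ω)` for `B_p`-almost every `ω`. -/
theorem stmt15 (N : ℕ) (hN : 1 ≤ N) (f : (Fin N → Bool) → ℝ≥0∞) :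
    (∀ p : ℝ≥0∞, p ≤ 1 → ∫⁻ ω, f ω ∂(bern N p) ≤ 1) ↔
    (∃ g : (Fin N → Bool) → ℝ≥0∞, ∃ h : ℕ → ℝ≥0∞,
      (∀ (P : Measure (Fin N → Bool)) [IsProbabilityMeasure P],
        (∀ π : Equiv.Perm (Fin N), P.map (fun ω i => ω (π i)) = P) →
        ∫⁻ ω, g ω ∂P ≤ 1) ∧
      (∀ p : ℝ≥0∞, p ≤ 1 →
        ∑ k ∈ Finset.range (N + 1),
          (N.choose k : ℝ≥0∞) * p ^ k * (1 - p) ^ (N - k) * h k ≤ 1) ∧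
      (∀ p : ℝ≥0∞, p ≤ 1 → ∀ᵐ ω ∂(bern N p), f ω = g ω * h (cnt ω))) :=
  stmt15_general N f
end
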